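/- arXiv:2101.06079 — 11 statements merged into one kernel-verified Lean document; each statement's English description precedes it below -/
import Mathlib

section
/- Let R_1, …, R_n be pairwise disjoint closed axis-aligned rectangles in ℝ², where R_m = [a_m,b_m]×[c_m,d_m]. Then R_i is negative (i.e., for every point family P respecting R there exists j ≠ i such that p_j dominates p_i) if and only if there exists j ≠ i such that the bottom-left vertex (a_j,c_j) of R_j dominates the top-right vertex (b_i,d_i) of R_i, i.e., b_i ≤ a_j and d_i ≤ c_j. -/
open Set

/-- A rectangle `R i` in a pairwise-disjoint family of closed axis-aligned
rectangles is negative (for every respecting point family, some other point dominates `p i`)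
iff some other rectangle's bottom-left vertex dominates `R i`'s top-right vertex. -/
theorem negative_iff_dominated_vertex {n : ℕ} (a b c d : Fin n → ℝ)
    (hab : ∀ m, a m ≤ b m) (hcd : ∀ m, c m ≤ d m)
    (R : Fin n → Set (ℝ × ℝ))
    (hR : ∀ m, R m = Icc (a m) (b m) ×ˢ Icc (c m) (d m))
    (hdisj : ∀ i j : Fin n, i ≠ j → Disjoint (R i) (R j))
    (i : Fin n) :
    (∀ p : Fin n → ℝ × ℝ, (∀ m, p m ∈ R m) →
        ∃ j, j ≠ i ∧ (p i).1 ≤ (p j).1 ∧ (p i).2 ≤ (p j).2) ↔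
      ∃ j, j ≠ i ∧ b i ≤ a j ∧ d i ≤ c j := by
  constructor
  · intro h
    by_contra hc
    push_neg at hc
    set p : Fin n → ℝ × ℝ := fun m => if m = i then (b m, d m) else (a m, c m) with hp
    obtain ⟨j, hji, h1, h2⟩ := h p (by
      intro m
      rw [hR m]
      by_cases hm : m = i <;>
        simp [hp, hm, hab m, hcd m, hab i, hcd i, le_refl])
    have hpj : p j = (a j, c j) := by simp [hp, hji]
    have hpi : p i = (b i, d i) := by simp [hp]
    rw [hpi, hpj] at h1 h2
    exact absurd h2 (not_le.mpr (hc j hji h1))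
  · rintro ⟨j, hji, h1, h2⟩ p hp
    have hi := hp i
    have hj := hp j
    rw [hR i] at hi
    rw [hR j] at hj
    exact ⟨j, hji, le_trans (le_trans hi.1.2 h1) hj.1.1,
      le_trans (le_trans hi.2.2 h2) hj.2.1⟩
end

section
/- Let R_1, …, R_n be pairwise disjoint closed axis-aligned rectangles in ℝ², and suppose R_i is non-negative (i.e., there is no j ≠ i such that the bottom-left vertex of R_j dominates the top-right vertex of R_i). Then R_i is positive (i.e., for every point family P respecting R, no p_j with j ≠ i dominates p_i) if and only if for every k ≠ i the rectangle R_i is disjoint from both the horizontal halfslab and the vertical halfslab of R_k. -/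
open Set

/-- A non-negative rectangle `R i` in a pairwise-disjoint family is positive
(no other point can ever dominate `p i`) iff `R i` avoids the horizontal and vertical
halfslabs of every other rectangle. -/
theorem positive_iff_halfslab_disjoint {n : ℕ} (a b c d : Fin n → ℝ)
    (hab : ∀ m, a m ≤ b m) (hcd : ∀ m, c m ≤ d m)
    (R : Fin n → Set (ℝ × ℝ))
    (hR : ∀ m, R m = Icc (a m) (b m) ×ˢ Icc (c m) (d m))
    (hdisj : ∀ i j : Fin n, i ≠ j → Disjoint (R i) (R j))
    (i : Fin n)
    (hnonneg : ¬ ∃ j, j ≠ i ∧ b i ≤ a j ∧ d i ≤ c j) :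
    (∀ p : Fin n → ℝ × ℝ, (∀ m, p m ∈ R m) →
        ∀ j, j ≠ i → ¬ ((p i).1 ≤ (p j).1 ∧ (p i).2 ≤ (p j).2)) ↔
      ∀ k, k ≠ i →
        Disjoint (R i) {q : ℝ × ℝ | ∃ r ∈ R k, q.2 = r.2 ∧ q.1 ≤ r.1} ∧
        Disjoint (R i) {q : ℝ × ℝ | ∃ r ∈ R k, q.1 = r.1 ∧ q.2 ≤ r.2} := by
  constructor
  · intro hpos k hk
    have mkp : ∀ (q r : ℝ × ℝ), q ∈ R i → r ∈ R k →
        q.1 ≤ r.1 → q.2 ≤ r.2 → False := by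
      intro q r hq hr h1 h2
      set p : Fin n → ℝ × ℝ := fun m => if m = i then q else if m = k then r else (a m, c m)
        with hp
      have hmem : ∀ m, p m ∈ R m := by
        intro m
        by_cases hmi : m = i
        · subst hmi; simpa [hp] using hq
        by_cases hmk : m = k
        · subst hmk; simpa [hp, hmi] using hr
        · rw [hp]; simp only [hmi, hmk, if_false]
          rw [hR m]
          exact ⟨⟨le_refl _, hab m⟩, le_refl _, hcd m⟩
      have hpi : p i = q := by simp [hp]
      have hpk : p k = r := by simp [hp, hk]
      exact hpos p hmem k hk ⟨by rw [hpi, hpk]; exact h1, by rw [hpi, hpk]; exact h2⟩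
    constructor
    · rw [Set.disjoint_left]
      rintro q hq ⟨r, hr, h2, h1⟩
      exact mkp q r hq hr h1 h2.le
    · rw [Set.disjoint_left]
      rintro q hq ⟨r, hr, h1, h2⟩
      exact mkp q r hq hr h1.le h2
  · rintro hd p hp j hj ⟨h1, h2⟩
    have hpi := hp i
    have hpj := hp j
    rw [hR i, Set.mem_prod, Set.mem_Icc, Set.mem_Icc] at hpi
    rw [hR j, Set.mem_prod, Set.mem_Icc, Set.mem_Icc] at hpj
    obtain ⟨⟨hai, hbi⟩, ⟨hci, hdi⟩⟩ := hpi
    obtain ⟨⟨haj, hbj⟩, ⟨hcj, hdj⟩⟩ := hpj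
    obtain ⟨hH, hV⟩ := hd j hj
    rw [Set.disjoint_left] at hH hV
    by_cases hy : c j ≤ (p i).2
    · exact hH (hp i) ⟨((p j).1, (p i).2),
        by rw [hR j]; exact ⟨⟨haj, hbj⟩, hy, le_trans h2 hdj⟩, rfl, h1⟩
    push_neg at hy
    by_cases hx : a j ≤ (p i).1
    · exact hV (hp i) ⟨((p i).1, (p j).2),
        by rw [hR j]; exact ⟨⟨hx, le_trans h1 hbj⟩, hcj, hdj⟩, rfl, h2⟩
    push_neg at hx
    have hdc : d i ≤ c j := by
      by_contra hlt
      push_neg at hlt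
      refine hH (show ((p i).1, c j) ∈ R i by
          rw [hR i]; exact ⟨⟨hai, hbi⟩, le_trans hci hy.le, hlt.le⟩)
        ⟨(a j, c j), by rw [hR j]; exact ⟨⟨le_refl _, hab j⟩, le_refl _, hcd j⟩, rfl, hx.le⟩
    have hba : b i ≤ a j := by
      by_contra hlt
      push_neg at hlt
      refine hV (show (a j, (p i).2) ∈ R i by
          rw [hR i]; exact ⟨⟨le_trans hai hx.le, hlt.le⟩, hci, hdi⟩)
        ⟨(a j, c j), by rw [hR j]; exact ⟨⟨le_refl _, hab j⟩, le_refl _, hcd j⟩, rfl, hy.le⟩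
    exact hnonneg ⟨j, hj, hba, hdc⟩
end

section
/- Let R_1, …, R_n be pairwise disjoint closed axis-aligned rectangles in ℝ², each non-negative, and let D = {q ∈ ℝ² : ∃ m, q.1 ≤ a_m ∧ q.2 ≤ c_m} be the guaranteed dominated region generated by the bottom-left vertices (a_m,c_m). If R_i is not a single point, then the intersection R_i ∩ frontier(D) is nonempty and preconnected, and it contains no bottom-left vertex (a_j,c_j) with j ≠ i. -/
open Set

namespace RectBoundaryAux

variable {n : ℕ}

/-- The guaranteed dominated region. -/
def Dset (a c : Fin n → ℝ) : Set (ℝ × ℝ) := {q : ℝ × ℝ | ∃ m, q.1 ≤ a m ∧ q.2 ≤ c m}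

/-- The strict version. -/
def Uset (a c : Fin n → ℝ) : Set (ℝ × ℝ) := {q : ℝ × ℝ | ∃ m, q.1 < a m ∧ q.2 < c m}

lemma isClosed_Dset (a c : Fin n → ℝ) : IsClosed (Dset a c) := by
  have h : Dset a c = ⋃ m, ({q : ℝ × ℝ | q.1 ≤ a m} ∩ {q : ℝ × ℝ | q.2 ≤ c m}) := by
    ext q; simp [Dset, Set.mem_iUnion, Set.mem_inter_iff, Set.mem_setOf_eq]
  rw [h]
  exact isClosed_iUnion_of_finite fun m =>
    (isClosed_le continuous_fst continuous_const).inter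
      (isClosed_le continuous_snd continuous_const)

lemma isOpen_Uset (a c : Fin n → ℝ) : IsOpen (Uset a c) := by
  have h : Uset a c = ⋃ m, ({q : ℝ × ℝ | q.1 < a m} ∩ {q : ℝ × ℝ | q.2 < c m}) := by
    ext q; simp [Uset, Set.mem_iUnion, Set.mem_inter_iff, Set.mem_setOf_eq]
  rw [h]
  exact isOpen_iUnion fun m =>
    (isOpen_lt continuous_fst continuous_const).inter
      (isOpen_lt continuous_snd continuous_const)

lemma interior_Dset (a c : Fin n → ℝ) : interior (Dset a c) = Uset a c := by
  apply Set.Subset.antisymm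
  · intro q hq
    rw [mem_interior_iff_mem_nhds, Metric.mem_nhds_iff] at hq
    obtain ⟨ε, hε, hball⟩ := hq
    have hmem : ((q.1 + ε/2, q.2 + ε/2) : ℝ × ℝ) ∈ Dset a c := by
      apply hball
      rw [Metric.mem_ball, Prod.dist_eq]
      have h1 : dist (q.1 + ε/2) q.1 = ε/2 := by
        rw [Real.dist_eq, add_sub_cancel_left, abs_of_pos (by linarith)]
      have h2 : dist (q.2 + ε/2) q.2 = ε/2 := by
        rw [Real.dist_eq, add_sub_cancel_left, abs_of_pos (by linarith)]
      rw [h1, h2, max_self]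
      linarith
    obtain ⟨m, h1, h2⟩ := hmem
    dsimp only at h1 h2
    exact ⟨m, by linarith, by linarith⟩
  · apply interior_maximal _ (isOpen_Uset a c)
    rintro q ⟨m, h1, h2⟩
    exact ⟨m, le_of_lt h1, le_of_lt h2⟩

lemma frontier_Dset (a c : Fin n → ℝ) : frontier (Dset a c) = Dset a c \ Uset a c := by
  rw [(isClosed_Dset a c).frontier_eq, interior_Dset]

lemma nostrict {a c : Fin n → ℝ} {p r : ℝ × ℝ} (hp : p ∈ frontier (Dset a c))
    (hr : r ∈ Dset a c) (h1 : p.1 < r.1) (h2 : p.2 < r.2) : False := by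
  rw [frontier_Dset] at hp
  obtain ⟨m, hm1, hm2⟩ := hr
  exact hp.2 ⟨m, lt_of_lt_of_le h1 hm1, lt_of_lt_of_le h2 hm2⟩

lemma ord {a c : Fin n → ℝ} {p r : ℝ × ℝ} (hp : p ∈ frontier (Dset a c))
    (hr : r ∈ frontier (Dset a c)) (h : p.1 - p.2 ≤ r.1 - r.2) : p.1 ≤ r.1 ∧ r.2 ≤ p.2 := by
  have hpD : p ∈ Dset a c := by rw [frontier_Dset] at hp; exact hp.1
  have hrD : r ∈ Dset a c := by rw [frontier_Dset] at hr; exact hr.1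
  constructor
  · by_contra hlt
    push_neg at hlt
    exact nostrict hr hpD hlt (by linarith)
  · by_contra hlt
    push_neg at hlt
    exact nostrict hp hrD (by linarith) hlt

/-- Parameterization of the staircase frontier by the anti-diagonal coordinate. -/
noncomputable def xstar (a c : Fin n → ℝ) (t : ℝ) : ℝ :=
  sSup {x : ℝ | ((x, x - t) : ℝ × ℝ) ∈ Dset a c}

variable [Nonempty (Fin n)]

lemma sset_nonempty (a c : Fin n → ℝ) (t : ℝ) :
    {x : ℝ | ((x, x - t) : ℝ × ℝ) ∈ Dset a c}.Nonempty := by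
  obtain ⟨m⟩ := ‹Nonempty (Fin n)›
  refine ⟨min (a m) (c m + t), ⟨m, min_le_left _ _, ?_⟩⟩
  have := min_le_right (a m) (c m + t)
  dsimp only
  linarith

lemma sset_bddAbove (a c : Fin n → ℝ) (t : ℝ) :
    BddAbove {x : ℝ | ((x, x - t) : ℝ × ℝ) ∈ Dset a c} := by
  refine ⟨Finset.univ.sup' Finset.univ_nonempty a, ?_⟩
  rintro x ⟨m, h1, _⟩
  exact le_trans h1 (Finset.le_sup' a (Finset.mem_univ m))

omit [Nonempty (Fin n)] in
lemma sset_closed (a c : Fin n → ℝ) (t : ℝ) :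
    IsClosed {x : ℝ | ((x, x - t) : ℝ × ℝ) ∈ Dset a c} := by
  have h : {x : ℝ | ((x, x - t) : ℝ × ℝ) ∈ Dset a c}
      = (fun x : ℝ => ((x, x - t) : ℝ × ℝ)) ⁻¹' Dset a c := rfl
  rw [h]
  exact (isClosed_Dset a c).preimage (continuous_id.prodMk (continuous_id.sub continuous_const))

lemma xstar_mem_frontier (a c : Fin n → ℝ) (t : ℝ) :
    ((xstar a c t, xstar a c t - t) : ℝ × ℝ) ∈ frontier (Dset a c) := by
  have hmem : xstar a c t ∈ {x : ℝ | ((x, x - t) : ℝ × ℝ) ∈ Dset a c} :=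
    (sset_closed a c t).csSup_mem (sset_nonempty a c t) (sset_bddAbove a c t)
  rw [frontier_Dset]
  refine ⟨hmem, ?_⟩
  rintro ⟨m, h1, h2⟩
  dsimp only at h1 h2
  have hx : min (a m) (c m + t) ∈ {x : ℝ | ((x, x - t) : ℝ × ℝ) ∈ Dset a c} := by
    refine ⟨m, min_le_left _ _, ?_⟩
    have := min_le_right (a m) (c m + t)
    dsimp only
    linarith
  have hle := le_csSup (sset_bddAbove a c t) hx
  have hgt : xstar a c t < min (a m) (c m + t) := lt_min h1 (by linarith)
  rw [xstar] at hgt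
  linarith

lemma eq_xstar (a c : Fin n → ℝ) {r : ℝ × ℝ} (hr : r ∈ frontier (Dset a c)) :
    r = ((xstar a c (r.1 - r.2), xstar a c (r.1 - r.2) - (r.1 - r.2)) : ℝ × ℝ) := by
  have hψ := xstar_mem_frontier a c (r.1 - r.2)
  have h1 := ord hr hψ (le_of_eq (by dsimp only; ring))
  have h2 := ord hψ hr (le_of_eq (by dsimp only; ring))
  dsimp only at h1 h2
  exact Prod.ext (le_antisymm h1.1 h2.1) (le_antisymm h2.2 h1.2)

lemma xstar_lip (a c : Fin n → ℝ) {s t : ℝ} (hst : s ≤ t) :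
    xstar a c s ≤ xstar a c t ∧ xstar a c t - t ≤ xstar a c s - s := by
  have h := ord (xstar_mem_frontier a c s) (xstar_mem_frontier a c t) (by dsimp only; linarith)
  exact h

lemma continuous_xstar (a c : Fin n → ℝ) : Continuous (xstar a c) := by
  apply LipschitzWith.continuous (K := 1)
  apply LipschitzWith.of_dist_le_mul
  intro s t
  rw [NNReal.coe_one, one_mul, Real.dist_eq, Real.dist_eq]
  rcases le_total s t with h | h
  · obtain ⟨h1, h2⟩ := xstar_lip a c h
    have h3 : |s - t| = t - s := by
      rw [abs_sub_comm, abs_of_nonneg (by linarith : (0:ℝ) ≤ t - s)]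
    rw [h3, abs_le]
    exact ⟨by linarith, by linarith⟩
  · obtain ⟨h1, h2⟩ := xstar_lip a c h
    have h3 : |s - t| = s - t := abs_of_nonneg (by linarith)
    rw [h3, abs_le]
    exact ⟨by linarith, by linarith⟩

end RectBoundaryAux

/-- For a pairwise-disjoint family of non-negative rectangles, the intersection
of a non-point rectangle `R i` with the guaranteed boundary (the frontier of the guaranteed
dominated region `D`) is a nonempty preconnected set containing no bottom-left vertex of
another rectangle. -/
theorem rect_inter_guaranteed_boundary {n : ℕ} (a b c d : Fin n → ℝ)
    (hab : ∀ m, a m ≤ b m) (hcd : ∀ m, c m ≤ d m)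
    (R : Fin n → Set (ℝ × ℝ))
    (hR : ∀ m, R m = Icc (a m) (b m) ×ˢ Icc (c m) (d m))
    (hdisj : ∀ i j : Fin n, i ≠ j → Disjoint (R i) (R j))
    (hnonneg : ∀ i, ¬ ∃ j, j ≠ i ∧ b i ≤ a j ∧ d i ≤ c j)
    (D : Set (ℝ × ℝ))
    (hD : D = {q : ℝ × ℝ | ∃ m, q.1 ≤ a m ∧ q.2 ≤ c m})
    (i : Fin n) (hnotpt : a i < b i ∨ c i < d i) :
    (R i ∩ frontier D).Nonempty ∧ IsPreconnected (R i ∩ frontier D) ∧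
      ∀ j, j ≠ i → (a j, c j) ∉ R i ∩ frontier D := by
  haveI : Nonempty (Fin n) := ⟨i⟩
  have hDD : D = RectBoundaryAux.Dset a c := hD
  rw [hDD]
  -- Part 3: no other bottom-left vertex is in the intersection.
  have hvert : ∀ j, j ≠ i → (a j, c j) ∉ R i ∩ frontier (RectBoundaryAux.Dset a c) := by
    rintro j hj ⟨hRi, -⟩
    have hRj : ((a j, c j) : ℝ × ℝ) ∈ R j := by
      rw [hR j]
      exact ⟨⟨le_refl _, hab j⟩, ⟨le_refl _, hcd j⟩⟩
    exact Set.disjoint_left.mp (hdisj j i hj) hRj hRi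
  -- the top-right corner is never in the strict region
  have hwU : ((b i, d i) : ℝ × ℝ) ∉ RectBoundaryAux.Uset a c := by
    rintro ⟨m, h1, h2⟩
    dsimp only at h1 h2
    have hmi : m ≠ i := by
      rintro rfl
      exact absurd h1 (not_lt.2 (hab m))
    exact hnonneg i ⟨m, hmi, le_of_lt h1, le_of_lt h2⟩
  -- Part 1: nonemptiness.
  have hne : (R i ∩ frontier (RectBoundaryAux.Dset a c)).Nonempty := by
    by_cases hw : ((b i, d i) : ℝ × ℝ) ∈ RectBoundaryAux.Dset a c
    · refine ⟨(b i, d i), ?_, ?_⟩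
      · rw [hR i]; exact ⟨⟨hab i, le_refl _⟩, ⟨hcd i, le_refl _⟩⟩
      · rw [RectBoundaryAux.frontier_Dset]; exact ⟨hw, hwU⟩
    · have hconv : Convex ℝ (R i) := by
        rw [hR i]; exact (convex_Icc _ _).prod (convex_Icc _ _)
      have hpc := hconv.isPreconnected
      by_contra hemp
      rw [Set.not_nonempty_iff_eq_empty] at hemp
      have hu : IsOpen (interior (RectBoundaryAux.Dset a c)) := isOpen_interior
      have hv : IsOpen (RectBoundaryAux.Dset a c)ᶜ :=
        (RectBoundaryAux.isClosed_Dset a c).isOpen_compl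
      have hfr : frontier (RectBoundaryAux.Dset a c)
          = RectBoundaryAux.Dset a c \ interior (RectBoundaryAux.Dset a c) :=
        (RectBoundaryAux.isClosed_Dset a c).frontier_eq
      have hsub : R i ⊆ interior (RectBoundaryAux.Dset a c) ∪ (RectBoundaryAux.Dset a c)ᶜ := by
        intro p hp
        by_cases hpD : p ∈ RectBoundaryAux.Dset a c
        · left
          by_contra hpint
          have : p ∈ R i ∩ frontier (RectBoundaryAux.Dset a c) := by
            rw [hfr]; exact ⟨hp, hpD, hpint⟩
          rw [hemp] at this
          exact this
        · exact Or.inr hpD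
      have h1 : (R i ∩ interior (RectBoundaryAux.Dset a c)).Nonempty := by
        refine ⟨(a i, c i), ?_, ?_⟩
        · rw [hR i]; exact ⟨⟨le_refl _, hab i⟩, ⟨le_refl _, hcd i⟩⟩
        · by_contra hpint
          have hpR : ((a i, c i) : ℝ × ℝ) ∈ R i := by
            rw [hR i]; exact ⟨⟨le_refl _, hab i⟩, ⟨le_refl _, hcd i⟩⟩
          have : ((a i, c i) : ℝ × ℝ) ∈ R i ∩ frontier (RectBoundaryAux.Dset a c) := by
            rw [hfr]; exact ⟨hpR, ⟨i, le_refl _, le_refl _⟩, hpint⟩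
          rw [hemp] at this
          exact this
      have h2 : (R i ∩ (RectBoundaryAux.Dset a c)ᶜ).Nonempty := by
        refine ⟨(b i, d i), ?_, hw⟩
        rw [hR i]; exact ⟨⟨hab i, le_refl _⟩, ⟨hcd i, le_refl _⟩⟩
      obtain ⟨p, -, hpu, hpv⟩ := hpc _ _ hu hv hsub h1 h2
      exact hpv (interior_subset hpu)
  -- Part 2: preconnectedness.
  have hpre : IsPreconnected (R i ∩ frontier (RectBoundaryAux.Dset a c)) := by
    have pair : ∀ x ∈ R i ∩ frontier (RectBoundaryAux.Dset a c),
        ∀ y ∈ R i ∩ frontier (RectBoundaryAux.Dset a c), x.1 - x.2 ≤ y.1 - y.2 →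
        ∃ t, t ⊆ R i ∩ frontier (RectBoundaryAux.Dset a c) ∧ x ∈ t ∧ y ∈ t ∧
          IsPreconnected t := by
      rintro x ⟨hxR, hxF⟩ y ⟨hyR, hyF⟩ hxy
      refine ⟨(fun s : ℝ => ((RectBoundaryAux.xstar a c s,
          RectBoundaryAux.xstar a c s - s) : ℝ × ℝ)) '' Icc (x.1 - x.2) (y.1 - y.2),
          ?_, ?_, ?_, ?_⟩
      · rintro p ⟨s, hs, rfl⟩
        have hψF := RectBoundaryAux.xstar_mem_frontier a c s
        refine ⟨?_, hψF⟩
        have h1 := RectBoundaryAux.ord hxF hψF (by dsimp only; linarith [hs.1])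
        have h2 := RectBoundaryAux.ord hψF hyF (by dsimp only; linarith [hs.2])
        dsimp only at h1 h2
        rw [hR i] at hxR hyR ⊢
        simp only [Set.mem_prod, Set.mem_Icc] at hxR hyR ⊢
        obtain ⟨⟨hx1, hx2⟩, hx3, hx4⟩ := hxR
        obtain ⟨⟨hy1, hy2⟩, hy3, hy4⟩ := hyR
        exact ⟨⟨le_trans hx1 h1.1, le_trans h2.1 hy2⟩, ⟨le_trans hy3 h2.2, le_trans h1.2 hx4⟩⟩
      · exact ⟨x.1 - x.2, ⟨le_refl _, hxy⟩, (RectBoundaryAux.eq_xstar a c hxF).symm⟩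
      · exact ⟨y.1 - y.2, ⟨hxy, le_refl _⟩, (RectBoundaryAux.eq_xstar a c hyF).symm⟩
      · exact isPreconnected_Icc.image _
          (((RectBoundaryAux.continuous_xstar a c).prodMk
            ((RectBoundaryAux.continuous_xstar a c).sub continuous_id)).continuousOn)
    apply isPreconnected_of_forall_pair
    intro x hx y hy
    rcases le_total (x.1 - x.2) (y.1 - y.2) with h | h
    · exact pair x hx y hy h
    · obtain ⟨t, ht, hyt, hxt, hc⟩ := pair y hy x hx h
      exact ⟨t, ht, hxt, hyt, hc⟩
  exact ⟨hne, hpre, hvert⟩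
end

section
/- Let D ⊆ ℝ² be a closed set that is downward closed with respect to the componentwise partial order (i.e., if q ∈ D and q'.1 ≤ q.1 and q'.2 ≤ q.2 then q' ∈ D). Then for every closed axis-aligned rectangle R = [a,b]×[c,d] (with a ≤ b, c ≤ d), the set frontier(D) ∩ R is preconnected. -/
/-!
Along the frontier of a closed lower set `D ⊆ ℝ²`, moving in the direction of increasing
`x - y` can only increase `x` and decrease `y`, since otherwise one frontier point would lie
strictly below another and hence in the interior of `D`. So `p ↦ p.1 - p.2` does not shrink
distances on `frontier D`, and the image of `frontier D ∩ R` for a rectangle `R` is an interval: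
every antidiagonal line meets `frontier D`, and by the monotonicity above the meeting point lies
coordinatewise between two points of `R`. The set is therefore a Lipschitz image of an interval.
-/

open Set

theorem IsPreconnected.of_dist_le_dist_image {X Y : Type*} [MetricSpace X] [PseudoMetricSpace Y]
    {f : X → Y} {s : Set X} (hf : ∀ x ∈ s, ∀ y ∈ s, dist x y ≤ dist (f x) (f y))
    (hs : IsPreconnected (f '' s)) : IsPreconnected s := by
  rcases s.eq_empty_or_nonempty with rfl | ⟨x₀, -⟩
  · exact isPreconnected_empty
  have : Nonempty X := ⟨x₀⟩
  have hinj : InjOn f s := fun x hx y hy hxy =>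
    dist_le_zero.1 <| (hf x hx y hy).trans (by rw [hxy, dist_self])
  have hlip : LipschitzOnWith 1 (Function.invFunOn f s) (f '' s) := by
    refine .of_dist_le_mul ?_
    rintro _ ⟨x, hx, rfl⟩ _ ⟨y, hy, rfl⟩
    rw [hinj.leftInvOn_invFunOn hx, hinj.leftInvOn_invFunOn hy, NNReal.coe_one, one_mul]
    exact hf x hx y hy
  rw [← hinj.leftInvOn_invFunOn.image_image]
  exact hs.image _ hlip.continuousOn

namespace IsLowerSet

variable {D : Set (ℝ × ℝ)} {p q : ℝ × ℝ}

theorem mem_interior_of_lt (hD : IsLowerSet D) (hq : q ∈ D) (h₁ : p.1 < q.1) (h₂ : p.2 < q.2) :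
    p ∈ interior D := by
  refine interior_maximal ?_ (isOpen_Iio.prod isOpen_Iio) ⟨h₁, h₂⟩
  exact fun r hr => hD ⟨hr.1.le, hr.2.le⟩ hq

theorem fst_le_and_snd_le_of_mem_frontier (hD : IsLowerSet D) (hDc : IsClosed D)
    (hp : p ∈ frontier D) (hq : q ∈ frontier D) (h : p.1 - p.2 ≤ q.1 - q.2) :
    p.1 ≤ q.1 ∧ q.2 ≤ p.2 := by
  constructor
  · by_contra! hlt
    exact hq.2 (hD.mem_interior_of_lt (hDc.frontier_subset hp) hlt (by linarith))
  · by_contra! hlt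
    exact hp.2 (hD.mem_interior_of_lt (hDc.frontier_subset hq) (by linarith) hlt)

theorem dist_le_dist_sub_of_mem_frontier (hD : IsLowerSet D) (hDc : IsClosed D)
    (hp : p ∈ frontier D) (hq : q ∈ frontier D) :
    dist p q ≤ dist (p.1 - p.2) (q.1 - q.2) := by
  wlog h : p.1 - p.2 ≤ q.1 - q.2 generalizing p q
  · rw [dist_comm, dist_comm (p.1 - p.2)]
    exact this hq hp (by linarith)
  obtain ⟨h₁, h₂⟩ := hD.fst_le_and_snd_le_of_mem_frontier hDc hp hq h
  rw [Prod.dist_eq, Real.dist_eq, Real.dist_eq, Real.dist_eq, abs_of_nonpos (by linarith),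
    abs_of_nonneg (by linarith), abs_of_nonpos (by linarith)]
  exact max_le (by linarith) (by linarith)

theorem exists_mem_frontier_sub_eq (hD : IsLowerSet D) (hp : p ∈ D) (hq : q ∉ interior D)
    (u : ℝ) : ∃ r ∈ frontier D, r.1 - r.2 = u := by
  set line : ℝ → ℝ × ℝ := fun t => (t, t - u)
  have hline : Continuous line := by fun_prop
  obtain ⟨t, ht⟩ : (frontier (line ⁻¹' D)).Nonempty := by
    refine nonempty_frontier_iff.2 ⟨⟨min p.1 (p.2 + u), hD ?_ hp⟩, fun hall => hq ?_⟩
    · exact ⟨min_le_left _ _, by linarith [min_le_right p.1 (p.2 + u)]⟩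
    · have hmem : line (max q.1 (q.2 + u) + 1) ∈ D := eq_univ_iff_forall.1 hall _
      exact hD.mem_interior_of_lt hmem (by linarith [le_max_left q.1 (q.2 + u)])
        (by linarith [le_max_right q.1 (q.2 + u)])
  exact ⟨line t, hline.frontier_preimage_subset D ht, by simp [line]⟩

end IsLowerSet

theorem frontier_downward_closed_inter_rect_preconnected_general
    (D : Set (ℝ × ℝ)) (hDclosed : IsClosed D)
    (hdown : ∀ q ∈ D, ∀ q' : ℝ × ℝ, q'.1 ≤ q.1 → q'.2 ≤ q.2 → q' ∈ D)
    (a b c d : ℝ) :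
    IsPreconnected (frontier D ∩ (Icc a b ×ˢ Icc c d)) := by
  have hD : IsLowerSet D := fun q q' hle hq => hdown q hq q' hle.1 hle.2
  refine .of_dist_le_dist_image (f := fun p => p.1 - p.2)
    (fun p hp q hq => hD.dist_le_dist_sub_of_mem_frontier hDclosed hp.1 hq.1) ?_
  refine OrdConnected.isPreconnected ⟨?_⟩
  rintro _ ⟨p, ⟨hpF, hpx, hpy⟩, rfl⟩ _ ⟨q, ⟨hqF, hqx, hqy⟩, rfl⟩ u ⟨hpu, huq⟩
  obtain ⟨r, hrF, rfl⟩ := hD.exists_mem_frontier_sub_eq (hDclosed.frontier_subset hpF) hqF.2 u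
  obtain ⟨hpr₁, hpr₂⟩ := hD.fst_le_and_snd_le_of_mem_frontier hDclosed hpF hrF hpu
  obtain ⟨hrq₁, hrq₂⟩ := hD.fst_le_and_snd_le_of_mem_frontier hDclosed hrF hqF huq
  exact ⟨r, ⟨hrF, ⟨hpx.1.trans hpr₁, hrq₁.trans hqx.2⟩, hqy.1.trans hrq₂, hpr₂.trans hpy.2⟩, rfl⟩

/-- The frontier of a closed, downward-closed set in ℝ² intersects any
closed axis-aligned rectangle in a preconnected set. -/
theorem frontier_downward_closed_inter_rect_preconnected
    (D : Set (ℝ × ℝ)) (hDclosed : IsClosed D)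
    (hdown : ∀ q ∈ D, ∀ q' : ℝ × ℝ, q'.1 ≤ q.1 → q'.2 ≤ q.2 → q' ∈ D)
    (a b c d : ℝ) (hab : a ≤ b) (hcd : c ≤ d) :
    IsPreconnected (frontier D ∩ (Icc a b ×ˢ Icc c d)) :=
  frontier_downward_closed_inter_rect_preconnected_general D hDclosed hdown a b c d
end

section
/- Let R_1, …, R_n be pairwise disjoint closed axis-aligned rectangles in ℝ² whose bottom-left vertices (a_m,c_m) satisfy a_1 < a_2 < … < a_n and c_1 > c_2 > … > c_n. Suppose R_i has no incoming arrow in the dependency graph G(R). Then for all indices k < i < l, there is no vertical arrow from R_k to R_l and no horizontal arrow from R_l to R_k. -/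
/-! No rectangle meets the strip directly above a source `R i`: the lowest one there would
be vertically visible from `R i` and, by the ordering, have smaller index, giving a
vertical arrow into `R i`. Symmetrically nothing meets the strip to its right. Hence no
other rectangle meets the closed quadrant north-east of the corner `(a i, c i)`: one lying
beyond both the top and the right side of `R i` would, by the ordering, also reach over
`R i` (if its index is smaller) or beside it (if larger). But an arrow `R k → R l` with
`k < i < l` puts a point of `R k` or `R l` into that quadrant. -/

open Set

/-- `R j` is vertically visible from `R i`: there is a vertical closed segment with one
endpoint in `R i` and the other in `R j` that meets no third region. -/
def VertVis {n : ℕ} (R : Fin n → Set (ℝ × ℝ)) (i j : Fin n) : Prop :=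
  ∃ x y₁ y₂ : ℝ, (x, y₁) ∈ R i ∧ (x, y₂) ∈ R j ∧
    ∀ t ∈ Set.uIcc y₁ y₂, ∀ m : Fin n, m ≠ i → m ≠ j → (x, t) ∉ R m

/-- `R j` is horizontally visible from `R i`: there is a horizontal closed segment with one
endpoint in `R i` and the other in `R j` that meets no third region. -/
def HorVis {n : ℕ} (R : Fin n → Set (ℝ × ℝ)) (i j : Fin n) : Prop :=
  ∃ y x₁ x₂ : ℝ, (x₁, y) ∈ R i ∧ (x₂, y) ∈ R j ∧
    ∀ t ∈ Set.uIcc x₁ x₂, ∀ m : Fin n, m ≠ i → m ≠ j → (t, y) ∉ R m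

/-- A vertical arrow from `R i` to `R j` in the dependency graph `G(R)`. -/
def VertArrow {n : ℕ} (R : Fin n → Set (ℝ × ℝ)) (i j : Fin n) : Prop :=
  i < j ∧ VertVis R i j

/-- A horizontal arrow from `R i` to `R j` in the dependency graph `G(R)`. -/
def HorArrow {n : ℕ} (R : Fin n → Set (ℝ × ℝ)) (i j : Fin n) : Prop :=
  j < i ∧ HorVis R i j

/-- An arrow from `R i` to `R j` in the dependency graph `G(R)`. -/
def Arrow {n : ℕ} (R : Fin n → Set (ℝ × ℝ)) (i j : Fin n) : Prop :=
  VertArrow R i j ∨ HorArrow R i j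

open Function

section Rectangles

variable {n : ℕ} {a b c d : Fin n → ℝ} {R : Fin n → Set (ℝ × ℝ)}

lemma exists_vertVis_above (hR : ∀ m, R m = Icc (a m) (b m) ×ˢ Icc (c m) (d m))
    (hdisj : Pairwise (Disjoint on R)) {i m₀ : Fin n} {x y : ℝ} (hm₀ : m₀ ≠ i)
    (hi : (x, d i) ∈ R i) (hy : d i < y) (hm₀y : (x, y) ∈ R m₀) :
    ∃ m, d i < c m ∧ VertVis R m i := by
  classical
  have starts_above : ∀ m ≠ i, ∀ t, d i ≤ t → (x, t) ∈ R m → d i < c m := by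
    intro m hm t ht hmt
    by_contra! hcm
    have hm_top : (x, d i) ∈ R m := by
      rw [hR] at hmt ⊢
      exact ⟨hmt.1, hcm, ht.trans hmt.2.2⟩
    exact disjoint_left.mp (hdisj hm) hm_top hi
  -- the lowest rectangle crossing the ray `{x} × [d i, ∞)` is the one seen from `R i`
  set T := Finset.univ.filter fun m ↦ m ≠ i ∧ ∃ t, d i ≤ t ∧ (x, t) ∈ R m
  have hT : ∀ {m}, m ∈ T ↔ m ≠ i ∧ ∃ t, d i ≤ t ∧ (x, t) ∈ R m := by simp [T]
  obtain ⟨m, hmT, hmin⟩ := T.exists_min_image c ⟨m₀, hT.2 ⟨hm₀, y, hy.le, hm₀y⟩⟩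
  obtain ⟨hmi, t, ht, hmt⟩ := hT.1 hmT
  have hdc := starts_above m hmi t ht hmt
  have hm_bot : (x, c m) ∈ R m := by
    rw [hR] at hmt ⊢
    exact ⟨hmt.1, le_rfl, hmt.2.1.trans hmt.2.2⟩
  refine ⟨m, hdc, x, c m, d i, hm_bot, hi, fun s hs m' hm'm hm'i hm's ↦ ?_⟩
  rw [uIcc_of_ge hdc.le] at hs
  have hcm' : c m ≤ c m' := hmin m' (hT.2 ⟨hm'i, s, hs.1, hm's⟩)
  have hs_eq : s = c m := by
    rw [hR] at hm's
    exact le_antisymm hs.2 (hcm'.trans hm's.2.1)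
  exact disjoint_left.mp (hdisj hm'm) (hs_eq ▸ hm's) hm_bot

lemma horVis_iff_vertVis_swap {i j : Fin n} :
    HorVis R i j ↔ VertVis (fun m ↦ Prod.swap ⁻¹' R m) i j :=
  Iff.rfl

lemma exists_horVis_right (hR : ∀ m, R m = Icc (a m) (b m) ×ˢ Icc (c m) (d m))
    (hdisj : Pairwise (Disjoint on R)) {i m₀ : Fin n} {x y : ℝ} (hm₀ : m₀ ≠ i)
    (hi : (b i, y) ∈ R i) (hx : b i < x) (hm₀x : (x, y) ∈ R m₀) :
    ∃ m, b i < a m ∧ HorVis R m i :=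
  (exists_vertVis_above (fun m ↦ by rw [hR, preimage_swap_prod])
    (fun _ _ h ↦ (hdisj h).preimage Prod.swap) hm₀ hi hx hm₀x).imp
      fun _ ↦ And.imp_right horVis_iff_vertVis_swap.mpr

variable (hR : ∀ m, R m = Icc (a m) (b m) ×ˢ Icc (c m) (d m))
  (hdisj : Pairwise (Disjoint on R)) {i : Fin n} (hsource : ∀ k, ¬ Arrow R k i)
include hR hdisj hsource

lemma notMem_above_of_source (hc : StrictAnti c) (hcd : c i ≤ d i) ⦃m : Fin n⦄ (hm : m ≠ i)
    ⦃x y : ℝ⦄ (hx : x ∈ Icc (a i) (b i)) (hy : d i < y) : (x, y) ∉ R m := fun hmem ↦ by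
  have hi : (x, d i) ∈ R i := by rw [hR]; exact ⟨hx, hcd, le_rfl⟩
  obtain ⟨m', hdc, hvis⟩ := exists_vertVis_above hR hdisj hm hi hy hmem
  exact hsource m' (Or.inl ⟨hc.lt_iff_gt.mp (hcd.trans_lt hdc), hvis⟩)

lemma notMem_right_of_source (ha : StrictMono a) (hab : a i ≤ b i) ⦃m : Fin n⦄ (hm : m ≠ i)
    ⦃x y : ℝ⦄ (hy : y ∈ Icc (c i) (d i)) (hx : b i < x) : (x, y) ∉ R m := fun hmem ↦ by
  have hi : (b i, y) ∈ R i := by rw [hR]; exact ⟨⟨hab, le_rfl⟩, hy⟩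
  obtain ⟨m', hba, hvis⟩ := exists_horVis_right hR hdisj hm hi hx hmem
  exact hsource m' (Or.inr ⟨ha.lt_iff_lt.mp (hab.trans_lt hba), hvis⟩)

lemma notMem_northeast_of_source (ha : StrictMono a) (hc : StrictAnti c) (hab : a i ≤ b i)
    (hcd : c i ≤ d i) ⦃m : Fin n⦄ (hm : m ≠ i) ⦃x y : ℝ⦄ (hx : a i ≤ x) (hy : c i ≤ y) :
    (x, y) ∉ R m := by
  intro hmem
  have above := notMem_above_of_source hR hdisj hsource hc hcd hm
  have right := notMem_right_of_source hR hdisj hsource ha hab hm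
  rcases le_or_gt x (b i) with hxb | hxb <;> rcases le_or_gt y (d i) with hyd | hyd
  · have hi : (x, y) ∈ R i := by rw [hR]; exact ⟨⟨hx, hxb⟩, hy, hyd⟩
    exact disjoint_left.mp (hdisj hm) hmem hi
  · exact above ⟨hx, hxb⟩ hyd hmem
  · exact right ⟨hy, hyd⟩ hxb hmem
  · rw [hR] at hmem
    rcases hm.lt_or_gt with hmi | hmi
    · refine above ⟨hab, le_rfl⟩ hyd ?_
      rw [hR]
      exact ⟨⟨(ha hmi).le.trans hab, hxb.le.trans hmem.1.2⟩, hmem.2⟩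
    · refine right ⟨le_rfl, hcd⟩ hxb ?_
      rw [hR]
      exact ⟨hmem.1, (hc hmi).le, hcd.trans (hyd.le.trans hmem.2.2)⟩

end Rectangles

/-- If `R i` is a source of `G(R)` for an ordered pairwise-disjoint family,
then there is no vertical arrow from `R k` to `R l` and no horizontal arrow from
`R l` to `R k` whenever `k < i < l`. -/
theorem source_separates_arrows {n : ℕ} (a b c d : Fin n → ℝ)
    (hab : ∀ m, a m ≤ b m) (hcd : ∀ m, c m ≤ d m)
    (R : Fin n → Set (ℝ × ℝ))
    (hR : ∀ m, R m = Icc (a m) (b m) ×ˢ Icc (c m) (d m))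
    (hdisj : ∀ i j : Fin n, i ≠ j → Disjoint (R i) (R j))
    (ha : StrictMono a) (hc : StrictAnti c)
    (i : Fin n) (hsource : ∀ k, ¬ Arrow R k i)
    (k l : Fin n) (hki : k < i) (hil : i < l) :
    ¬ VertArrow R k l ∧ ¬ HorArrow R l k := by
  have northeast := notMem_northeast_of_source hR (fun _ _ ↦ hdisj _ _) hsource ha hc
    (hab i) (hcd i)
  constructor
  · rintro ⟨-, x, y₁, y₂, hk, hl, -⟩
    have hxl : a l ≤ x := by rw [hR] at hl; exact hl.1.1
    have hyk : c k ≤ y₁ := by rw [hR] at hk; exact hk.2.1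
    exact northeast hki.ne ((ha hil).le.trans hxl) ((hc hki).le.trans hyk) hk
  · rintro ⟨-, y, x₁, x₂, hl, hk, -⟩
    have hxl : a l ≤ x₁ := by rw [hR] at hl; exact hl.1.1
    have hyk : c k ≤ y := by rw [hR] at hk; exact hk.2.1
    exact northeast hil.ne' ((ha hil).le.trans hxl) ((hc hki).le.trans hyk) hl
end

section
/- Let R_1, …, R_n be pairwise disjoint closed axis-aligned rectangles in ℝ² whose bottom-left vertices (a_m,c_m) satisfy a_1 < a_2 < … < a_n and c_1 > c_2 > … > c_n, and suppose R_i and R_j (i < j) both have no incoming arrows in the dependency graph G(R). Then no rectangle R_m with m < i or m > j has a directed path in G(R) (a chain of one or more arrows) ending at any rectangle R_s with i ≤ s ≤ j. -/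
open Set

/-! An arrow into a rectangle of `R i, …, R j` always starts among `R i, …, R j`, so no path
can enter from outside. For a vertical arrow `R k → R t` with `k < i ≤ t`: since `R i` is a
source, every earlier rectangle ends left of `a i` (otherwise the lowest rectangle above `R i` on
the line `x = a i` would see `R i`), so `R k` shares no vertical line with `R t`, which starts
right of `a i`. Horizontal arrows are the mirror image under reflection in the diagonal with the
indices reversed, using that `R j` is a source. -/

theorem top_lt_bottom_of_disjoint_prod {α β : Type*} [LinearOrder β] {s s' : Set α}
    {c d c' d' : β} {x : α} (h : Disjoint (s ×ˢ Icc c d) (s' ×ˢ Icc c' d'))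
    (hx : x ∈ s) (hx' : x ∈ s') (hc : c' ≤ c) (hcd : c ≤ d) : d' < c := by
  by_contra! hd
  exact disjoint_left.mp h (mk_mem_prod hx ⟨le_rfl, hcd⟩) (mk_mem_prod hx' ⟨hc, hd⟩)

section Visibility

variable {n : ℕ} {a b c d : Fin n → ℝ} {R : Fin n → Set (ℝ × ℝ)}

/-- The witness is the lowest rectangle above `R i` that meets the vertical line through `x`. -/
theorem exists_vertVis_of_mem_above (hcd : ∀ m, c m ≤ d m)
    (hR : ∀ m, R m = Icc (a m) (b m) ×ˢ Icc (c m) (d m))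
    (hdisj : ∀ i j, i ≠ j → Disjoint (R i) (R j)) {i k : Fin n} {x : ℝ}
    (hxi : x ∈ Icc (a i) (b i)) (hxk : x ∈ Icc (a k) (b k)) (hk : d i < c k) :
    ∃ ℓ, d i < c ℓ ∧ VertVis R ℓ i := by
  obtain ⟨ℓ, ⟨hxℓ, hℓ⟩, hmin⟩ := exists_min_image {ℓ | x ∈ Icc (a ℓ) (b ℓ) ∧ d i < c ℓ} c
    (toFinite _) ⟨k, hxk, hk⟩
  have hmem : ∀ {m y}, (x, y) ∈ R m ↔ x ∈ Icc (a m) (b m) ∧ y ∈ Icc (c m) (d m) := by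
    intro m y; rw [hR, mem_prod]
  have hℓ_top : (x, c ℓ) ∈ R ℓ := hmem.2 ⟨hxℓ, le_rfl, hcd ℓ⟩
  have hi_top : (x, d i) ∈ R i := hmem.2 ⟨hxi, hcd i, le_rfl⟩
  refine ⟨ℓ, hℓ, x, c ℓ, d i, hℓ_top, hi_top, fun t ht m hmℓ hmi hm => ?_⟩
  rw [uIcc_of_ge hℓ.le] at ht
  obtain ⟨hxm, hcm, hdm⟩ := hmem.1 hm
  by_cases hm_above : d i < c m
  · -- by minimality of `ℓ`, the segment can only meet `R m` at `(x, c ℓ) ∈ R ℓ`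
    have : c ℓ ≤ c m := hmin m ⟨hxm, hm_above⟩
    have htop : t = c ℓ := by linarith [ht.2, hcm]
    exact disjoint_left.mp (hdisj m ℓ hmℓ) (htop ▸ hm) hℓ_top
  · exact disjoint_left.mp (hdisj m i hmi) (hmem.2 ⟨hxm, not_lt.mp hm_above, ht.1.trans hdm⟩)
      hi_top

/-- The reflection of the family in the diagonal, with the indices reversed so that it stays
ordered. -/
def diagReflection (R : Fin n → Set (ℝ × ℝ)) (m : Fin n) : Set (ℝ × ℝ) :=
  Prod.swap ⁻¹' R m.rev

theorem vertArrow_diagReflection_iff {k t : Fin n} :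
    VertArrow (diagReflection R) k.rev t.rev ↔ HorArrow R k t := by
  simp only [diagReflection, VertArrow, HorArrow, VertVis, HorVis, Fin.rev_lt_rev, Fin.rev_rev,
    mem_preimage, Prod.swap_prod_mk]
  refine and_congr_right fun _ => exists₃_congr fun x y₁ y₂ => and_congr_right fun _ =>
    and_congr_right fun _ => forall₂_congr fun s _ => ?_
  rw [← Fin.revPerm.forall_congr_right]
  simp [Fin.revPerm]

structure IsOrderedRectFamily (a b c d : Fin n → ℝ) (R : Fin n → Set (ℝ × ℝ)) : Prop where
  left_le_right : ∀ m, a m ≤ b m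
  bottom_le_top : ∀ m, c m ≤ d m
  eq_prod : ∀ m, R m = Icc (a m) (b m) ×ˢ Icc (c m) (d m)
  pairwise_disjoint : ∀ i j, i ≠ j → Disjoint (R i) (R j)
  left_strictMono : StrictMono a
  bottom_strictAnti : StrictAnti c

namespace IsOrderedRectFamily

variable {i j k t : Fin n}

theorem right_lt_left_of_lt (hF : IsOrderedRectFamily a b c d R) (hi : ∀ k, ¬ VertArrow R k i)
    (hk : k < i) : b k < a i := by
  by_contra! h
  have hxi : a i ∈ Icc (a i) (b i) := ⟨le_rfl, hF.left_le_right i⟩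
  have hxk : a i ∈ Icc (a k) (b k) := ⟨(hF.left_strictMono hk).le, h⟩
  have hdisj := hF.pairwise_disjoint k i hk.ne
  rw [hF.eq_prod, hF.eq_prod] at hdisj
  have hik : d i < c k := top_lt_bottom_of_disjoint_prod hdisj hxk hxi
    (hF.bottom_strictAnti hk).le (hF.bottom_le_top k)
  obtain ⟨ℓ, hℓ, hvis⟩ := exists_vertVis_of_mem_above hF.bottom_le_top hF.eq_prod
    hF.pairwise_disjoint hxi hxk hik
  exact hi ℓ ⟨hF.bottom_strictAnti.lt_iff_gt.mp ((hF.bottom_le_top i).trans_lt hℓ), hvis⟩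

theorem le_of_vertArrow (hF : IsOrderedRectFamily a b c d R) (hi : ∀ k, ¬ VertArrow R k i)
    (h : VertArrow R k t) (hit : i ≤ t) : i ≤ k := by
  by_contra! hki
  obtain ⟨x, y₁, y₂, hk, ht, -⟩ := h.2
  rw [hF.eq_prod, mem_prod] at hk ht
  linarith [hF.right_lt_left_of_lt hi hki, hF.left_strictMono.monotone hit, hk.1.2, ht.1.1]

theorem reflect (hF : IsOrderedRectFamily a b c d R) :
    IsOrderedRectFamily (c ∘ Fin.rev) (d ∘ Fin.rev) (a ∘ Fin.rev) (b ∘ Fin.rev)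
      (diagReflection R) where
  left_le_right m := hF.bottom_le_top m.rev
  bottom_le_top m := hF.left_le_right m.rev
  eq_prod m := by rw [diagReflection, hF.eq_prod, preimage_swap_prod]; rfl
  pairwise_disjoint i j hij :=
    (hF.pairwise_disjoint _ _ (Fin.rev_injective.ne hij)).preimage Prod.swap
  left_strictMono := hF.bottom_strictAnti.comp Fin.rev_strictAnti
  bottom_strictAnti := hF.left_strictMono.comp_strictAnti Fin.rev_strictAnti

theorem le_of_horArrow (hF : IsOrderedRectFamily a b c d R) (hj : ∀ k, ¬ HorArrow R k j)
    (h : HorArrow R k t) (htj : t ≤ j) : k ≤ j := by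
  have hj' : ∀ k', ¬ VertArrow (diagReflection R) k' j.rev := fun k' h' =>
    hj k'.rev (vertArrow_diagReflection_iff.mp (by rwa [Fin.rev_rev]))
  exact Fin.rev_le_rev.mp (hF.reflect.le_of_vertArrow hj' (vertArrow_diagReflection_iff.mpr h)
    (Fin.rev_le_rev.mpr htj))

theorem mem_Icc_of_arrow (hF : IsOrderedRectFamily a b c d R) (hi : ∀ k, ¬ Arrow R k i)
    (hj : ∀ k, ¬ Arrow R k j) (h : Arrow R k t) (ht : t ∈ Icc i j) : k ∈ Icc i j := by
  rcases h with h | h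
  · exact ⟨hF.le_of_vertArrow (fun k hk => hi k (.inl hk)) h ht.1, h.1.le.trans ht.2⟩
  · exact ⟨ht.1.trans h.1.le, hF.le_of_horArrow (fun k hk => hj k (.inr hk)) h ht.2⟩

theorem mem_Icc_of_transGen (hF : IsOrderedRectFamily a b c d R) (hi : ∀ k, ¬ Arrow R k i)
    (hj : ∀ k, ¬ Arrow R k j) (h : Relation.TransGen (Arrow R) k t) (ht : t ∈ Icc i j) :
    k ∈ Icc i j := by
  induction h using Relation.TransGen.head_induction_on with
  | single h => exact hF.mem_Icc_of_arrow hi hj h ht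
  | head h _ ih => exact hF.mem_Icc_of_arrow hi hj h ih

end IsOrderedRectFamily

end Visibility

theorem no_path_into_subproblem_general {n : ℕ} (a b c d : Fin n → ℝ)
    (hab : ∀ m, a m ≤ b m) (hcd : ∀ m, c m ≤ d m)
    (R : Fin n → Set (ℝ × ℝ))
    (hR : ∀ m, R m = Icc (a m) (b m) ×ˢ Icc (c m) (d m))
    (hdisj : ∀ i j : Fin n, i ≠ j → Disjoint (R i) (R j))
    (ha : StrictMono a) (hc : StrictAnti c)
    (i j : Fin n)
    (hsi : ∀ k, ¬ Arrow R k i) (hsj : ∀ k, ¬ Arrow R k j)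
    (m s : Fin n) (hm : m < i ∨ j < m) (hsi' : i ≤ s) (hsj' : s ≤ j) :
    ¬ Relation.TransGen (Arrow R) m s := by
  have hF : IsOrderedRectFamily a b c d R := ⟨hab, hcd, hR, hdisj, ha, hc⟩
  intro hpath
  have hm_mem : m ∈ Icc i j := hF.mem_Icc_of_transGen hsi hsj hpath ⟨hsi', hsj'⟩
  rcases hm with hm | hm
  · exact hm.not_ge hm_mem.1
  · exact hm.not_ge hm_mem.2

/-- If `R i` and `R j` (`i < j`) are both sources of `G(R)` for an ordered
pairwise-disjoint family, then no region outside `[R i, R j]` has a directed path in `G(R)`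
to a region inside `[R i, R j]`. -/
theorem no_path_into_subproblem {n : ℕ} (a b c d : Fin n → ℝ)
    (hab : ∀ m, a m ≤ b m) (hcd : ∀ m, c m ≤ d m)
    (R : Fin n → Set (ℝ × ℝ))
    (hR : ∀ m, R m = Icc (a m) (b m) ×ˢ Icc (c m) (d m))
    (hdisj : ∀ i j : Fin n, i ≠ j → Disjoint (R i) (R j))
    (ha : StrictMono a) (hc : StrictAnti c)
    (i j : Fin n) (hij : i < j)
    (hsi : ∀ k, ¬ Arrow R k i) (hsj : ∀ k, ¬ Arrow R k j)
    (m s : Fin n) (hm : m < i ∨ j < m) (hsi' : i ≤ s) (hsj' : s ≤ j) :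
    ¬ Relation.TransGen (Arrow R) m s :=
  no_path_into_subproblem_general a b c d hab hcd R hR hdisj ha hc i j hsi hsj m s hm hsi' hsj'
end

section
/- Let R_1, …, R_n be pairwise disjoint closed axis-aligned rectangles in ℝ² whose bottom-left vertices (a_m,c_m) satisfy a_1 < a_2 < … < a_n and c_1 > c_2 > … > c_n, and let i ≤ j be such that every R_s with i ≤ s ≤ j is a sink of the dependency graph G(R). Let R* be the smallest closed axis-aligned rectangle containing R_i ∪ R_j. Then R_s ⊆ R* for every s with i ≤ s ≤ j, and R* ∩ R_m = ∅ for every m with m < i or m > j. -/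
open Set

/-!
If `R s` is a sink and `R m` with `s < m` were not strictly to the right of `R s`, then the two
rectangles would share a vertical line; as `c m < c s`, disjointness puts `R m` below `R s`, and
the highest rectangle on that line below `R s` is vertically visible from `R s` and has a larger
index, giving an arrow out of `R s`. Symmetrically, every `R m` with `m < s` lies strictly above
`R s`. Hence the sinks `R i, …, R j` form a staircase inside `R*`, while the other rectangles lie
strictly above or strictly to the right of it.
-/

def IsSink {n : ℕ} (R : Fin n → Set (ℝ × ℝ)) (s : Fin n) : Prop :=
  ∀ m, ¬ Arrow R s m

section Visibility

variable {n : ℕ} {a b c d : Fin n → ℝ} {R : Fin n → Set (ℝ × ℝ)}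

lemma exists_vertVis_below (hcd : ∀ m, c m ≤ d m)
    (hR : ∀ m, R m = Icc (a m) (b m) ×ˢ Icc (c m) (d m))
    (hdisj : ∀ i j : Fin n, i ≠ j → Disjoint (R i) (R j))
    {s m : Fin n} {x : ℝ} (hxs : x ∈ Icc (a s) (b s)) (hxm : x ∈ Icc (a m) (b m))
    (hbelow : d m < c s) :
    ∃ k, d k < c s ∧ VertVis R s k := by
  classical
  have mem : ∀ {k : Fin n} {y : ℝ}, (x, y) ∈ R k ↔ x ∈ Icc (a k) (b k) ∧ y ∈ Icc (c k) (d k) :=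
    fun {k _} => by rw [hR k, mem_prod]
  let S := Finset.univ.filter fun k => x ∈ Icc (a k) (b k) ∧ d k < c s
  obtain ⟨k, hkS, hkmax⟩ :=
    S.exists_max_image d ⟨m, Finset.mem_filter.2 ⟨Finset.mem_univ _, hxm, hbelow⟩⟩
  obtain ⟨-, hxk, hdk⟩ := Finset.mem_filter.1 hkS
  refine ⟨k, hdk, x, c s, d k, mem.2 ⟨hxs, le_rfl, hcd s⟩, mem.2 ⟨hxk, hcd k, le_rfl⟩, ?_⟩
  intro t ht l hls hlk hl
  rw [uIcc_of_ge hdk.le] at ht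
  obtain ⟨hxl, hcl, hdl⟩ := mem.1 hl
  have hdls : d l < c s := by
    by_contra! h
    exact disjoint_left.1 (hdisj l s hls) (mem.2 ⟨hxl, hcl.trans ht.2, h⟩)
      (mem.2 ⟨hxs, le_rfl, hcd s⟩)
  have htk : t = d k :=
    le_antisymm (hdl.trans (hkmax l (Finset.mem_filter.2 ⟨Finset.mem_univ _, hxl, hdls⟩))) ht.1
  exact disjoint_left.1 (hdisj l k hlk) (htk ▸ hl) (mem.2 ⟨hxk, hcd k, le_rfl⟩)

/-- Transposing the plane turns horizontal visibility into vertical visibility. -/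
lemma exists_horVis_left (hab : ∀ m, a m ≤ b m)
    (hR : ∀ m, R m = Icc (a m) (b m) ×ˢ Icc (c m) (d m))
    (hdisj : ∀ i j : Fin n, i ≠ j → Disjoint (R i) (R j))
    {s m : Fin n} {y : ℝ} (hys : y ∈ Icc (c s) (d s)) (hym : y ∈ Icc (c m) (d m))
    (hleft : b m < a s) :
    ∃ k, b k < a s ∧ HorVis R s k :=
  exists_vertVis_below (R := fun m => Prod.swap ⁻¹' R m) hab
    (fun m => by rw [hR m, preimage_swap_prod]) (fun i j h => (hdisj i j h).preimage _)
    hys hym hleft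

end Visibility

namespace IsSink

variable {n : ℕ} {a b c d : Fin n → ℝ} {R : Fin n → Set (ℝ × ℝ)} {s m : Fin n}

lemma right_lt_left_of_lt (hs : IsSink R s) (hab : ∀ m, a m ≤ b m) (hcd : ∀ m, c m ≤ d m)
    (hR : ∀ m, R m = Icc (a m) (b m) ×ˢ Icc (c m) (d m))
    (hdisj : ∀ i j : Fin n, i ≠ j → Disjoint (R i) (R j))
    (ha : StrictMono a) (hc : StrictAnti c) (hsm : s < m) :
    b s < a m := by
  by_contra! h
  have hxs : a m ∈ Icc (a s) (b s) := ⟨(ha hsm).le, h⟩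
  have hxm : a m ∈ Icc (a m) (b m) := ⟨le_rfl, hab m⟩
  have hbelow : d m < c s := by
    by_contra! h'
    have hs' : (a m, c s) ∈ R s := by rw [hR]; exact ⟨hxs, le_rfl, hcd s⟩
    have hm' : (a m, c s) ∈ R m := by rw [hR]; exact ⟨hxm, (hc hsm).le, h'⟩
    exact disjoint_left.1 (hdisj s m hsm.ne) hs' hm'
  obtain ⟨k, hdk, hvis⟩ := exists_vertVis_below hcd hR hdisj hxs hxm hbelow
  exact hs k (Or.inl ⟨hc.lt_iff_gt.1 ((hcd k).trans_lt hdk), hvis⟩)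

lemma top_lt_bottom_of_lt (hs : IsSink R s) (hab : ∀ m, a m ≤ b m) (hcd : ∀ m, c m ≤ d m)
    (hR : ∀ m, R m = Icc (a m) (b m) ×ˢ Icc (c m) (d m))
    (hdisj : ∀ i j : Fin n, i ≠ j → Disjoint (R i) (R j))
    (ha : StrictMono a) (hc : StrictAnti c) (hms : m < s) :
    d s < c m := by
  by_contra! h
  have hys : c m ∈ Icc (c s) (d s) := ⟨(hc hms).le, h⟩
  have hym : c m ∈ Icc (c m) (d m) := ⟨le_rfl, hcd m⟩
  have hleft : b m < a s := by
    by_contra! h'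
    have hs' : (a s, c m) ∈ R s := by rw [hR]; exact ⟨⟨le_rfl, hab s⟩, hys⟩
    have hm' : (a s, c m) ∈ R m := by rw [hR]; exact ⟨⟨(ha hms).le, h'⟩, hym⟩
    exact disjoint_left.1 (hdisj s m hms.ne') hs' hm'
  obtain ⟨k, hbk, hvis⟩ := exists_horVis_left hab hR hdisj hys hym hleft
  exact hs k (Or.inr ⟨ha.lt_iff_lt.1 ((hab k).trans_lt hbk), hvis⟩)

end IsSink

/-- For a maximal sequence of sinks `[R i, R j]` of `G(R)` in an ordered
pairwise-disjoint family, the smallest rectangle `R*` containing `R i ∪ R j` contains every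
`R s` with `i ≤ s ≤ j` and is disjoint from every `R m` with `m < i` or `m > j`. -/
theorem compound_region_contains_and_disjoint {n : ℕ} (a b c d : Fin n → ℝ)
    (hab : ∀ m, a m ≤ b m) (hcd : ∀ m, c m ≤ d m)
    (R : Fin n → Set (ℝ × ℝ))
    (hR : ∀ m, R m = Icc (a m) (b m) ×ˢ Icc (c m) (d m))
    (hdisj : ∀ i j : Fin n, i ≠ j → Disjoint (R i) (R j))
    (ha : StrictMono a) (hc : StrictAnti c)
    (i j : Fin n) (hij : i ≤ j)
    (hsink : ∀ s, i ≤ s → s ≤ j → ∀ m, ¬ Arrow R s m)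
    (Rstar : Set (ℝ × ℝ))
    (hRstar : Rstar = Icc (min (a i) (a j)) (max (b i) (b j)) ×ˢ
        Icc (min (c i) (c j)) (max (d i) (d j))) :
    (∀ s, i ≤ s → s ≤ j → R s ⊆ Rstar) ∧
      ∀ m, (m < i ∨ j < m) → Rstar ∩ R m = ∅ := by
  have right {s m} (hi : i ≤ s) (hj : s ≤ j) (hsm : s < m) : b s < a m :=
    IsSink.right_lt_left_of_lt (hsink s hi hj) hab hcd hR hdisj ha hc hsm
  have above {s m} (hi : i ≤ s) (hj : s ≤ j) (hms : m < s) : d s < c m :=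
    IsSink.top_lt_bottom_of_lt (hsink s hi hj) hab hcd hR hdisj ha hc hms
  subst hRstar
  refine ⟨fun s hi hj => ?_, fun m hm => ?_⟩
  · rw [hR s]
    refine prod_mono (Icc_subset_Icc ((min_le_left _ _).trans (ha.monotone hi)) ?_)
      (Icc_subset_Icc ((min_le_right _ _).trans (hc.antitone hj)) ?_)
    · rcases hj.eq_or_lt with rfl | hlt
      exacts [le_max_right _ _, ((right hi hj hlt).trans_le (hab j)).le.trans (le_max_right _ _)]
    · rcases hi.eq_or_lt with rfl | hlt
      exacts [le_max_left _ _, ((above hi hj hlt).trans_le (hcd i)).le.trans (le_max_left _ _)]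
  · rw [← disjoint_iff_inter_eq_empty, hR m, disjoint_prod]
    rcases hm with hm | hm
    · have hlt : max (d i) (d j) < c m :=
        max_lt (above le_rfl hij hm) (above hij le_rfl (hm.trans_le hij))
      exact Or.inr (disjoint_left.2 fun y hy hy' => (hy.2.trans_lt hlt).not_ge hy'.1)
    · have hlt : max (b i) (b j) < a m :=
        max_lt (right le_rfl hij (hij.trans_lt hm)) (right hij le_rfl hm)
      exact Or.inl (disjoint_left.2 fun x hx hx' => (hx.2.trans_lt hlt).not_ge hx'.1)
end

section
/- Let R_1, …, R_n be pairwise disjoint closed axis-aligned rectangles in ℝ² whose bottom-left vertices (a_m,c_m) satisfy a_1 < a_2 < … < a_n and c_1 > c_2 > … > c_n, let i ≤ j be such that every R_s with i ≤ s ≤ j is a sink of the dependency graph G(R), and let P respect R. Then: (1) if no p_k with k < i dominates p_i, then no p_k with k < i dominates any p_s with i ≤ s ≤ j; (2) if some p_k with k < i dominates p_j, then that p_k dominates p_s for every i ≤ s ≤ j; (3) if no p_k with k > j dominates p_j, then no p_k with k > j dominates any p_s with i ≤ s ≤ j; (4) if some p_k with k > j dominates p_i, then that p_k dominates p_s for every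 i ≤ s ≤ j. -/
open Set

/-- A point `p` (Pareto) dominates a point `q`. -/
def Dominates (p q : ℝ × ℝ) : Prop := q.1 ≤ p.1 ∧ q.2 ≤ p.2

section Aux

variable {n : ℕ} (a b c d : Fin n → ℝ)

lemma sink_vert (hab : ∀ m, a m ≤ b m) (hcd : ∀ m, c m ≤ d m)
    (R : Fin n → Set (ℝ × ℝ))
    (hR : ∀ m, R m = Icc (a m) (b m) ×ˢ Icc (c m) (d m))
    (hdisj : ∀ i j : Fin n, i ≠ j → Disjoint (R i) (R j))
    (ha : StrictMono a) (hc : StrictAnti c)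
    (s : Fin n) (hs : ∀ m, ¬ Arrow R s m)
    (m₀ : Fin n) (hm : s < m₀) : b s < a m₀ := by
  classical
  by_contra hle
  push_neg at hle
  set x := a m₀ with hx
  have hxs : a s ≤ x := (ha hm).le
  have memRs : (x, c s) ∈ R s := by
    rw [hR]; exact ⟨⟨hxs, hle⟩, le_refl _, hcd s⟩
  have key : ∀ m : Fin n, m ≠ s → a m ≤ x → x ≤ b m → c m ≤ c s → d m < c s := by
    intro m hm' h1 h2 h3
    by_contra h
    push_neg at h
    exact Set.disjoint_left.mp (hdisj m s hm')
      (by rw [hR]; exact ⟨⟨h1, h2⟩, h3, h⟩) memRs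
  have hdm0 : d m₀ < c s := key m₀ (ne_of_gt hm) le_rfl (hab m₀) (hc hm).le
  let F : Finset (Fin n) :=
    Finset.univ.filter (fun m : Fin n => a m ≤ x ∧ x ≤ b m ∧ d m < c s ∧ d m₀ ≤ d m)
  have hm₀F : m₀ ∈ F := by
    simp only [F, Finset.mem_filter, Finset.mem_univ, true_and]
    exact ⟨le_rfl, hab m₀, hdm0, le_rfl⟩
  obtain ⟨m', hm'F, hmax⟩ := F.exists_max_image d ⟨m₀, hm₀F⟩
  obtain ⟨h1, h2, h3, h4⟩ := (Finset.mem_filter.mp hm'F).2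
  have hcm' : c m' < c s := lt_of_le_of_lt (hcd m') h3
  have hsm' : s < m' := by
    by_contra hh
    push_neg at hh
    exact absurd hcm' (not_lt.mpr (hc.antitone hh))
  have memRm' : (x, d m') ∈ R m' := by
    rw [hR]; exact ⟨⟨h1, h2⟩, hcd m', le_rfl⟩
  apply hs m'
  left
  refine ⟨hsm', x, c s, d m', memRs, memRm', ?_⟩
  intro t ht m hms hmm' hmem
  rw [Set.uIcc_comm, Set.uIcc_of_le h3.le] at ht
  obtain ⟨ht1, ht2⟩ := ht
  rw [hR] at hmem
  obtain ⟨⟨ha1, ha2⟩, hc1, hc2⟩ := hmem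
  have htlt : t < c s := by
    rcases eq_or_lt_of_le ht2 with h | h
    · subst h
      exact absurd memRs (Set.disjoint_left.mp (hdisj m s hms)
        (by rw [hR]; exact ⟨⟨ha1, ha2⟩, hc1, hc2⟩))
    · exact h
  have hdmcs : d m < c s := key m hms ha1 ha2 (le_trans hc1 htlt.le)
  have hmF : m ∈ F := by
    simp only [F, Finset.mem_filter, Finset.mem_univ, true_and]
    exact ⟨ha1, ha2, hdmcs, le_trans h4 (le_trans ht1 hc2)⟩
  have hdd : d m ≤ d m' := hmax m hmF
  have hteq : t = d m' := le_antisymm (le_trans hc2 hdd) ht1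
  subst hteq
  exact Set.disjoint_left.mp (hdisj m m' hmm')
    (by rw [hR]; exact ⟨⟨ha1, ha2⟩, hc1, hc2⟩) memRm'

lemma sink_hor (hab : ∀ m, a m ≤ b m) (hcd : ∀ m, c m ≤ d m)
    (R : Fin n → Set (ℝ × ℝ))
    (hR : ∀ m, R m = Icc (a m) (b m) ×ˢ Icc (c m) (d m))
    (hdisj : ∀ i j : Fin n, i ≠ j → Disjoint (R i) (R j))
    (ha : StrictMono a) (hc : StrictAnti c)
    (s : Fin n) (hs : ∀ m, ¬ Arrow R s m)
    (m₀ : Fin n) (hm : m₀ < s) : d s < c m₀ := by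
  classical
  by_contra hle
  push_neg at hle
  set y := c m₀ with hy
  have hys : c s ≤ y := (hc hm).le
  have memRs : (a s, y) ∈ R s := by
    rw [hR]; exact ⟨⟨le_refl _, hab s⟩, hys, hle⟩
  have key : ∀ m : Fin n, m ≠ s → c m ≤ y → y ≤ d m → a m ≤ a s → b m < a s := by
    intro m hm' h1 h2 h3
    by_contra h
    push_neg at h
    exact Set.disjoint_left.mp (hdisj m s hm')
      (by rw [hR]; exact ⟨⟨h3, h⟩, h1, h2⟩) memRs
  have hbm0 : b m₀ < a s := key m₀ (ne_of_lt hm) le_rfl (hcd m₀) (ha hm).le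
  let F : Finset (Fin n) :=
    Finset.univ.filter (fun m : Fin n => c m ≤ y ∧ y ≤ d m ∧ b m < a s ∧ b m₀ ≤ b m)
  have hm₀F : m₀ ∈ F := by
    simp only [F, Finset.mem_filter, Finset.mem_univ, true_and]
    exact ⟨le_rfl, hcd m₀, hbm0, le_rfl⟩
  obtain ⟨m', hm'F, hmax⟩ := F.exists_max_image b ⟨m₀, hm₀F⟩
  obtain ⟨h1, h2, h3, h4⟩ := (Finset.mem_filter.mp hm'F).2
  have ham' : a m' < a s := lt_of_le_of_lt (hab m') h3
  have hsm' : m' < s := by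
    by_contra hh
    push_neg at hh
    exact absurd ham' (not_lt.mpr (ha.monotone hh))
  have memRm' : (b m', y) ∈ R m' := by
    rw [hR]; exact ⟨⟨hab m', le_rfl⟩, h1, h2⟩
  apply hs m'
  right
  refine ⟨hsm', y, a s, b m', memRs, memRm', ?_⟩
  intro t ht m hms hmm' hmem
  rw [Set.uIcc_comm, Set.uIcc_of_le h3.le] at ht
  obtain ⟨ht1, ht2⟩ := ht
  rw [hR] at hmem
  obtain ⟨⟨ha1, ha2⟩, hc1, hc2⟩ := hmem
  have htlt : t < a s := by
    rcases eq_or_lt_of_le ht2 with h | h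
    · subst h
      exact absurd memRs (Set.disjoint_left.mp (hdisj m s hms)
        (by rw [hR]; exact ⟨⟨ha1, ha2⟩, hc1, hc2⟩))
    · exact h
  have hbmas : b m < a s := key m hms hc1 hc2 (le_trans ha1 htlt.le)
  have hmF : m ∈ F := by
    simp only [F, Finset.mem_filter, Finset.mem_univ, true_and]
    exact ⟨hc1, hc2, hbmas, le_trans h4 (le_trans ht1 ha2)⟩
  have hdd : b m ≤ b m' := hmax m hmF
  have hteq : t = b m' := le_antisymm (le_trans ha2 hdd) ht1
  subst hteq
  exact Set.disjoint_left.mp (hdisj m m' hmm')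
    (by rw [hR]; exact ⟨⟨ha1, ha2⟩, hc1, hc2⟩) memRm'

end Aux

/-- For a sequence of sinks `[R i, R j]` of `G(R)` in an ordered
pairwise-disjoint family and a respecting point family `p`, domination (or its absence)
by points outside the sequence extends to the whole streak `[p i, p j]`. -/


theorem streak_domination {n : ℕ} (a b c d : Fin n → ℝ)
    (hab : ∀ m, a m ≤ b m) (hcd : ∀ m, c m ≤ d m)
    (R : Fin n → Set (ℝ × ℝ))
    (hR : ∀ m, R m = Icc (a m) (b m) ×ˢ Icc (c m) (d m))
    (hdisj : ∀ i j : Fin n, i ≠ j → Disjoint (R i) (R j))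
    (ha : StrictMono a) (hc : StrictAnti c)
    (p : Fin n → ℝ × ℝ) (hp : ∀ m, p m ∈ R m)
    (i j : Fin n) (hij : i ≤ j)
    (hsink : ∀ s, i ≤ s → s ≤ j → ∀ m, ¬ Arrow R s m) :
    ((∀ k, k < i → ¬ Dominates (p k) (p i)) →
        ∀ k, k < i → ∀ s, i ≤ s → s ≤ j → ¬ Dominates (p k) (p s)) ∧
    (∀ k, k < i → Dominates (p k) (p j) →
        ∀ s, i ≤ s → s ≤ j → Dominates (p k) (p s)) ∧
    ((∀ k, j < k → ¬ Dominates (p k) (p j)) →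
        ∀ k, j < k → ∀ s, i ≤ s → s ≤ j → ¬ Dominates (p k) (p s)) ∧
    (∀ k, j < k → Dominates (p k) (p i) →
        ∀ s, i ≤ s → s ≤ j → Dominates (p k) (p s)) := by
  have hpm : ∀ m, (a m ≤ (p m).1 ∧ (p m).1 ≤ b m) ∧ (c m ≤ (p m).2 ∧ (p m).2 ≤ d m) := by
    intro m
    have h := hp m
    rw [hR m] at h
    exact ⟨h.1, h.2⟩
  have hV : ∀ s, i ≤ s → s ≤ j → ∀ m, s < m → b s < a m := fun s h1 h2 m hm =>
    sink_vert a b c d hab hcd R hR hdisj ha hc s (hsink s h1 h2) m hm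
  have hH : ∀ s, i ≤ s → s ≤ j → ∀ m, m < s → d s < c m := fun s h1 h2 m hm =>
    sink_hor a b c d hab hcd R hR hdisj ha hc s (hsink s h1 h2) m hm
  refine ⟨?_, ?_, ?_, ?_⟩
  · intro hno k hk s h1 h2 hdom
    apply hno k hk
    rcases eq_or_lt_of_le h1 with h | h
    · rw [h]; exact hdom
    · exact ⟨le_trans (hpm i).1.2 (le_trans (hV i le_rfl hij s h).le
        (le_trans (hpm s).1.1 hdom.1)),
        le_trans (hpm i).2.2 (le_trans (hH i le_rfl hij k hk).le (hpm k).2.1)⟩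
  · intro k hk hdom s h1 h2
    refine ⟨?_, le_trans (hpm s).2.2
      (le_trans (hH s h1 h2 k (lt_of_lt_of_le hk h1)).le (hpm k).2.1)⟩
    rcases eq_or_lt_of_le h2 with h | h
    · rw [h]; exact hdom.1
    · exact le_trans (hpm s).1.2 (le_trans (hV s h1 h2 j h).le
        (le_trans (hpm j).1.1 hdom.1))
  · intro hno k hk s h1 h2 hdom
    apply hno k hk
    rcases eq_or_lt_of_le h2 with h | h
    · rw [← h]; exact hdom
    · exact ⟨le_trans (hpm j).1.2 (le_trans (hV j hij le_rfl k hk).le (hpm k).1.1),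
        le_trans (hpm j).2.2 (le_trans (hH j hij le_rfl s h).le
          (le_trans (hpm s).2.1 hdom.2))⟩
  · intro k hk hdom s h1 h2
    refine ⟨le_trans (hpm s).1.2
      (le_trans (hV s h1 h2 k (lt_of_le_of_lt h2 hk)).le (hpm k).1.1), ?_⟩
    rcases eq_or_lt_of_le h1 with h | h
    · rw [← h]; exact hdom.2
    · exact le_trans (hpm s).2.2 (le_trans (hH s h1 h2 i h).le
        (le_trans (hpm i).2.1 hdom.2))
end

section
/- Let R_1, …, R_n be pairwise disjoint nondegenerate closed axis-aligned rectangles in ℝ² (each R_m = [a_m,b_m]×[c_m,d_m] with a_m < b_m and c_m < d_m) whose bottom-left vertices satisfy a_1 < a_2 < … < a_n and c_1 > c_2 > … > c_n. If R_i has no incoming arrow in the dependency graph G(R), then for every point family P respecting R and every k ≠ i, the point p_k does not dominate p_i; that is, p_i lies on the Pareto front of P. -/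
open Set

/-- For an ordered pairwise-disjoint family of nondegenerate rectangles, if
`R i` is a source of `G(R)`, then for every respecting point family the point `p i` lies on
the Pareto front: no other point dominates it. -/
theorem source_point_on_pareto_front {n : ℕ} (a b c d : Fin n → ℝ)
    (hab : ∀ m, a m < b m) (hcd : ∀ m, c m < d m)
    (R : Fin n → Set (ℝ × ℝ))
    (hR : ∀ m, R m = Icc (a m) (b m) ×ˢ Icc (c m) (d m))
    (hdisj : ∀ i j : Fin n, i ≠ j → Disjoint (R i) (R j))
    (ha : StrictMono a) (hc : StrictAnti c)
    (i : Fin n) (hsource : ∀ k, ¬ Arrow R k i) :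
    ∀ p : Fin n → ℝ × ℝ, (∀ m, p m ∈ R m) →
      ∀ k, k ≠ i → ¬ ((p i).1 ≤ (p k).1 ∧ (p i).2 ≤ (p k).2) := by
  intro p hp k hk hdom
  obtain ⟨h1, h2⟩ := hdom
  have memR : ∀ m : Fin n, ∀ q : ℝ × ℝ, q ∈ R m ↔
      (a m ≤ q.1 ∧ q.1 ≤ b m) ∧ (c m ≤ q.2 ∧ q.2 ≤ d m) := by
    intro m q
    rw [hR m, Set.mem_prod, Set.mem_Icc, Set.mem_Icc]
  have hpmem : ∀ m, (a m ≤ (p m).1 ∧ (p m).1 ≤ b m) ∧ (c m ≤ (p m).2 ∧ (p m).2 ≤ d m) := by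
    intro m
    have := hp m
    rwa [memR m] at this
  rcases lt_or_gt_of_ne hk with hki | hik
  · -- k < i : build a vertical arrow into i
    set S : Set (Fin n) := {m | m ≠ i ∧ ∃ t, (p i).2 ≤ t ∧ t ≤ (p k).2 ∧ ((p i).1, t) ∈ R m}
      with hSdef
    have hkS : k ∈ S := by
      refine ⟨hk, (p k).2, h2, le_refl _, ?_⟩
      rw [memR]
      exact ⟨⟨le_of_lt (lt_of_lt_of_le (ha hki) (hpmem i).1.1),
        le_trans h1 (hpmem k).1.2⟩, (hpmem k).2⟩
    have hltS : ∀ m ∈ S, m < i := by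
      rintro m ⟨hmne, t, ht1, ht2, hmt⟩
      rcases lt_or_gt_of_ne hmne with h | h
      · exact h
      · exfalso
        rw [memR] at hmt
        have hmmem : ((p i).1, c i) ∈ R m := by
          rw [memR]
          exact ⟨hmt.1, le_of_lt (hc h), le_trans (le_trans (hpmem i).2.1 ht1) hmt.2.2⟩
        have himem : ((p i).1, c i) ∈ R i := by
          rw [memR]
          exact ⟨(hpmem i).1, le_refl _, le_of_lt (hcd i)⟩
        exact Set.disjoint_left.mp (hdisj m i hmne) hmmem himem
    obtain ⟨m, hmS, hmin⟩ := Set.exists_min_image S (fun m => max (c m) (p i).2)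
      (Set.toFinite S) ⟨k, hkS⟩
    obtain ⟨hmne, t₀, ht₀1, ht₀2, hmt₀⟩ := hmS
    rw [memR] at hmt₀
    have hsle : max (c m) (p i).2 ≤ (p k).2 :=
      max_le (le_trans hmt₀.2.1 ht₀2) (le_trans ht₀1 ht₀2)
    have hsmem : ((p i).1, max (c m) (p i).2) ∈ R m := by
      rw [memR]
      exact ⟨hmt₀.1, le_max_left _ _,
        max_le (le_of_lt (hcd m)) (le_trans ht₀1 hmt₀.2.2)⟩
    refine hsource m (Or.inl ⟨hltS m ⟨hmne, t₀, ht₀1, ht₀2, by rw [memR]; exact hmt₀⟩, ?_⟩)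
    refine ⟨(p i).1, max (c m) (p i).2, (p i).2, hsmem, by simpa using hp i, ?_⟩
    rw [Set.uIcc_of_ge (le_max_right _ _)]
    rintro t ⟨ht1, ht2⟩ m' hm'm hm'i hmem'
    have hm'S : m' ∈ S := by
      refine ⟨hm'i, t, ht1, le_trans ht2 hsle, hmem'⟩
    have hmin' := hmin m' hm'S
    rw [memR] at hmem'
    have hs'le : max (c m') (p i).2 ≤ t := max_le hmem'.2.1 ht1
    have hts : t = max (c m) (p i).2 :=
      le_antisymm ht2 (le_trans hmin' hs'le)
    have : ((p i).1, t) ∈ R m := by rw [hts]; exact hsmem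
    exact Set.disjoint_left.mp (hdisj m m' (Ne.symm hm'm)) this (by rw [memR]; exact hmem')
  · -- i < k : build a horizontal arrow into i
    set S : Set (Fin n) := {m | m ≠ i ∧ ∃ t, (p i).1 ≤ t ∧ t ≤ (p k).1 ∧ (t, (p i).2) ∈ R m}
      with hSdef
    have hkS : k ∈ S := by
      refine ⟨hk, (p k).1, h1, le_refl _, ?_⟩
      rw [memR]
      exact ⟨(hpmem k).1, ⟨le_of_lt (lt_of_lt_of_le (hc hik) (hpmem i).2.1),
        le_trans h2 (hpmem k).2.2⟩⟩
    have hltS : ∀ m ∈ S, i < m := by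
      rintro m ⟨hmne, t, ht1, ht2, hmt⟩
      rcases lt_or_gt_of_ne hmne with h | h
      · exfalso
        rw [memR] at hmt
        have hmmem : (a i, (p i).2) ∈ R m := by
          rw [memR]
          exact ⟨⟨le_of_lt (ha h), le_trans (le_trans (hpmem i).1.1 ht1) hmt.1.2⟩, hmt.2⟩
        have himem : (a i, (p i).2) ∈ R i := by
          rw [memR]
          exact ⟨⟨le_refl _, le_of_lt (hab i)⟩, (hpmem i).2⟩
        exact Set.disjoint_left.mp (hdisj m i hmne) hmmem himem
      · exact h
    obtain ⟨m, hmS, hmin⟩ := Set.exists_min_image S (fun m => max (a m) (p i).1)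
      (Set.toFinite S) ⟨k, hkS⟩
    obtain ⟨hmne, t₀, ht₀1, ht₀2, hmt₀⟩ := hmS
    rw [memR] at hmt₀
    have hsle : max (a m) (p i).1 ≤ (p k).1 :=
      max_le (le_trans hmt₀.1.1 ht₀2) (le_trans ht₀1 ht₀2)
    have hsmem : (max (a m) (p i).1, (p i).2) ∈ R m := by
      rw [memR]
      exact ⟨⟨le_max_left _ _, max_le (le_of_lt (hab m)) (le_trans ht₀1 hmt₀.1.2)⟩, hmt₀.2⟩
    refine hsource m (Or.inr ⟨hltS m ⟨hmne, t₀, ht₀1, ht₀2, by rw [memR]; exact hmt₀⟩, ?_⟩)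
    refine ⟨(p i).2, max (a m) (p i).1, (p i).1, hsmem, by simpa using hp i, ?_⟩
    rw [Set.uIcc_of_ge (le_max_right _ _)]
    rintro t ⟨ht1, ht2⟩ m' hm'm hm'i hmem'
    have hm'S : m' ∈ S := ⟨hm'i, t, ht1, le_trans ht2 hsle, hmem'⟩
    have hmin' := hmin m' hm'S
    rw [memR] at hmem'
    have hs'le : max (a m') (p i).1 ≤ t := max_le hmem'.1.1 ht1
    have hts : t = max (a m) (p i).1 :=
      le_antisymm ht2 (le_trans hmin' hs'le)
    have : (t, (p i).2) ∈ R m := by rw [hts]; exact hsmem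
    exact Set.disjoint_left.mp (hdisj m m' (Ne.symm hm'm)) this (by rw [memR]; exact hmem')
end

section
/- Let R_1, …, R_n be pairwise disjoint closed axis-aligned rectangles in ℝ² (possibly degenerate), with bottom-left vertices v_1, …, v_n, and suppose the family is truncated in the sense that R_m ∩ interior(D) = ∅ for every m, where D = {q ∈ ℝ² : ∃ m, q.1 ≤ (v_m).1 ∧ q.2 ≤ (v_m).2}. If R_k = {p} is a single point, then for every l ≠ k the interior of R_l is disjoint from both the horizontal halfslab and the vertical halfslab of the point p. -/
open Set

/-- In a truncated family of pairwise-disjoint rectangles (no rectangle meets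
the interior of the guaranteed dominated region `D`), a point region `R k = {p}` has no
outgoing arrows: the halfslabs of `p` avoid the interior of every other rectangle. -/
theorem point_region_halfslabs_avoid_interiors {n : ℕ} (a b c d : Fin n → ℝ)
    (hab : ∀ m, a m ≤ b m) (hcd : ∀ m, c m ≤ d m)
    (R : Fin n → Set (ℝ × ℝ))
    (hR : ∀ m, R m = Icc (a m) (b m) ×ˢ Icc (c m) (d m))
    (hdisj : ∀ i j : Fin n, i ≠ j → Disjoint (R i) (R j))
    (D : Set (ℝ × ℝ))
    (hD : D = {q : ℝ × ℝ | ∃ m, q.1 ≤ a m ∧ q.2 ≤ c m})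
    (htrunc : ∀ m, R m ∩ interior D = ∅)
    (k : Fin n) (p : ℝ × ℝ) (hk : R k = {p}) :
    ∀ l, l ≠ k →
      Disjoint (interior (R l)) {q : ℝ × ℝ | q.2 = p.2 ∧ q.1 ≤ p.1} ∧
      Disjoint (interior (R l)) {q : ℝ × ℝ | q.1 = p.1 ∧ q.2 ≤ p.2} := by
  intro l _
  -- p is the bottom-left corner of R k
  have hpk : (a k, c k) = p := by
    have h1 : ((a k, c k) : ℝ × ℝ) ∈ R k := by
      rw [hR]
      exact ⟨⟨le_refl _, hab k⟩, ⟨le_refl _, hcd k⟩⟩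
    rw [hk] at h1
    exact h1
  have hp1 : p.1 = a k := by rw [← hpk]
  have hp2 : p.2 = c k := by rw [← hpk]
  -- the open quadrant below-left of (a k, c k) is inside interior D
  have hU : {q : ℝ × ℝ | q.1 < a k ∧ q.2 < c k} ⊆ interior D := by
    apply interior_maximal
    · intro q hq
      rw [hD]
      exact ⟨k, le_of_lt hq.1, le_of_lt hq.2⟩
    · exact (isOpen_lt continuous_fst continuous_const).inter
        (isOpen_lt continuous_snd continuous_const)
  have hint : interior (R l) = Ioo (a l) (b l) ×ˢ Ioo (c l) (d l) := by
    rw [hR, interior_prod_eq, interior_Icc, interior_Icc]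
  -- key: no point of interior (R l) has both coordinates ≤ those of p
  have key : ∀ q : ℝ × ℝ, q ∈ interior (R l) → q.1 ≤ p.1 → q.2 ≤ p.2 → False := by
    intro q hq hq1 hq2
    rw [hint] at hq
    obtain ⟨⟨ha1, ha2⟩, ⟨hb1, hb2⟩⟩ := hq
    set x := (a l + q.1) / 2 with hx
    set y := (c l + q.2) / 2 with hy
    have hx1 : a l < x := by simp [hx]; linarith
    have hx2 : x < q.1 := by simp [hx]; linarith
    have hy1 : c l < y := by simp [hy]; linarith
    have hy2 : y < q.2 := by simp [hy]; linarith
    have hmem : ((x, y) : ℝ × ℝ) ∈ R l := by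
      rw [hR]
      exact ⟨⟨le_of_lt hx1, by linarith⟩, ⟨le_of_lt hy1, by linarith⟩⟩
    have hmemD : ((x, y) : ℝ × ℝ) ∈ interior D := by
      apply hU
      constructor
      · show x < a k; rw [← hp1]; linarith
      · show y < c k; rw [← hp2]; linarith
    have := htrunc l
    have : ((x, y) : ℝ × ℝ) ∈ R l ∩ interior D := ⟨hmem, hmemD⟩
    rw [htrunc l] at this
    exact this
  constructor
  · rw [Set.disjoint_right]
    intro q hq hq'
    exact key q hq' hq.2 (le_of_eq hq.1)
  · rw [Set.disjoint_right]
    intro q hq hq'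
    exact key q hq' (le_of_eq hq.1) hq.2
end

section
/- Let S be a finite nonempty set of points in ℝ² and let D = {q ∈ ℝ² : ∃ s ∈ S, q.1 ≤ s.1 ∧ q.2 ≤ s.2}. Then D is closed and connected, and its topological frontier equals the set of points of D that are not strictly dominated by any point of S, i.e., frontier(D) = {q ∈ D : ¬∃ s ∈ S, q.1 < s.1 ∧ q.2 < s.2}. -/
open Set

/-- The guaranteed dominated region `D` generated by a finite nonempty set
`S ⊆ ℝ²` is closed and connected, and its frontier consists exactly of the points of `D`
that are not strictly dominated by any point of `S`. -/
theorem guaranteed_dominated_region_closed_connected_frontier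
    (S : Finset (ℝ × ℝ)) (hS : S.Nonempty)
    (D : Set (ℝ × ℝ))
    (hD : D = {q : ℝ × ℝ | ∃ s ∈ S, q.1 ≤ s.1 ∧ q.2 ≤ s.2}) :
    IsClosed D ∧ IsConnected D ∧
      frontier D = {q ∈ D | ¬ ∃ s ∈ S, q.1 < s.1 ∧ q.2 < s.2} := by
  obtain ⟨s₀, hs₀⟩ := hS
  have hDeq : D = ⋃ s ∈ (S : Set (ℝ × ℝ)), Set.Iic s.1 ×ˢ Set.Iic s.2 := by
    rw [hD]; ext q
    simp only [Set.mem_setOf_eq, Set.mem_iUnion, Set.mem_prod, Set.mem_Iic]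
    tauto
  have hclosed : IsClosed D := by
    rw [hDeq]
    exact (S.finite_toSet).isClosed_biUnion fun s _ => isClosed_Iic.prod isClosed_Iic
  have hconn : IsConnected D := by
    set a : ℝ := S.inf' ⟨s₀, hs₀⟩ Prod.fst
    set b : ℝ := S.inf' ⟨s₀, hs₀⟩ Prod.snd
    have hmem : ∀ s ∈ (S : Set (ℝ × ℝ)), (a, b) ∈ Set.Iic s.1 ×ˢ Set.Iic s.2 := by
      intro s hs
      exact ⟨Set.mem_Iic.mpr (Finset.inf'_le Prod.fst hs), Set.mem_Iic.mpr (Finset.inf'_le Prod.snd hs)⟩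
    constructor
    · exact ⟨(a, b), hDeq ▸ Set.mem_biUnion hs₀ (hmem s₀ hs₀)⟩
    · rw [hDeq, ← Set.sUnion_image]
      apply isPreconnected_sUnion (a, b)
      · rintro t ⟨s, hs, rfl⟩; exact hmem s hs
      · rintro t ⟨s, hs, rfl⟩
        exact ((convex_Iic s.1).prod (convex_Iic s.2)).isPreconnected
  have hint : interior D = {q : ℝ × ℝ | ∃ s ∈ S, q.1 < s.1 ∧ q.2 < s.2} := by
    ext q
    constructor
    · intro hq
      obtain ⟨ε, hε, hball⟩ := Metric.mem_nhds_iff.mp (mem_interior_iff_mem_nhds.mp hq)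
      have hq' : (q.1 + ε / 2, q.2 + ε / 2) ∈ D := by
        apply hball
        simp [Metric.mem_ball, Prod.dist_eq, Real.dist_eq, abs_of_nonneg hε.le,
          abs_of_pos (half_pos hε)]
        linarith
      rw [hD] at hq'
      obtain ⟨s, hs, h1, h2⟩ := hq'
      exact ⟨s, hs, by dsimp at h1 h2 ⊢; constructor <;> linarith⟩
    · rintro ⟨s, hs, h1, h2⟩
      rw [mem_interior]
      refine ⟨{p : ℝ × ℝ | p.1 < s.1 ∧ p.2 < s.2}, ?_, ?_, h1, h2⟩
      · intro p hp
        rw [hD]; exact ⟨s, hs, hp.1.le, hp.2.le⟩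
      · exact (isOpen_lt continuous_fst continuous_const).inter
          (isOpen_lt continuous_snd continuous_const)
  refine ⟨hclosed, hconn, ?_⟩
  rw [hclosed.frontier_eq, hint]
  ext q
  simp only [Set.mem_diff, Set.mem_setOf_eq, Set.mem_sep_iff]
end
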